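/- arXiv:1410.3033 — 2 statements merged into one kernel-verified Lean document; each statement's English description precedes it below -/
import Mathlib

section
/- Let f : 2^Ω → ℝ_{≥0} be a monotone nondecreasing submodular set function with f(∅) = 0 on a finite ground set Ω, and k ≥ 1. Let G_k be the set produced by the greedy algorithm that starts from ∅ and repeatedly adds an element maximizing the marginal increase of f, for k steps. Then f(G_k) ≥ (1 − (1−1/k)^k) · max_{|W| ≤ k} f(W) ≥ (1 − 1/e) · max_{|W| ≤ k} f(W). -/
/-!
By monotonicity and submodularity, `f W - f S` is at most the sum over `x ∈ W` of the marginal gains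
`f (insert x S) - f S`, each of which is at most the greedy gain. Hence when `#W ≤ k` every greedy
step closes at least a `1/k` fraction of the gap `f W - f (G j)`, the gap shrinks geometrically
with ratio `1 - 1/k`, and `(1 - 1/k)^k ≤ e⁻¹`.
-/

open Finset

def Submodular {Ω : Type*} [DecidableEq Ω] (f : Finset Ω → ℝ) : Prop :=
  ∀ X Y : Finset Ω, X ⊆ Y → ∀ x ∉ Y, f (insert x Y) - f Y ≤ f (insert x X) - f X

namespace Submodular

variable {Ω : Type*} [DecidableEq Ω] {f : Finset Ω → ℝ}

theorem sub_le_sum_marginal (hf : Submodular f) (S W : Finset Ω) :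
    f (S ∪ W) - f S ≤ ∑ x ∈ W, (f (insert x S) - f S) := by
  induction W using Finset.induction with
  | empty => simp
  | @insert a W ha ih =>
    have hgain : f (insert a (S ∪ W)) - f (S ∪ W) ≤ f (insert a S) - f S := by
      by_cases haS : a ∈ S
      · rw [insert_eq_of_mem (mem_union_left W haS), insert_eq_of_mem haS, sub_self, sub_self]
      · exact hf S (S ∪ W) subset_union_left a (by simp [haS, ha])
    rw [sum_insert ha, union_insert]
    linarith

theorem sub_le_card_mul_greedy_gain (hf : Submodular f) (hmono : Monotone f) {S : Finset Ω}
    {x : Ω} (hx : ∀ y, f (insert y S) ≤ f (insert x S)) (W : Finset Ω) :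
    f W - f S ≤ #W * (f (insert x S) - f S) :=
  calc f W - f S ≤ f (S ∪ W) - f S := by gcongr; exact hmono subset_union_right
    _ ≤ ∑ y ∈ W, (f (insert y S) - f S) := hf.sub_le_sum_marginal S W
    _ ≤ #W * (f (insert x S) - f S) := by
      rw [← nsmul_eq_mul]
      exact sum_le_card_nsmul _ _ _ fun y _ => sub_le_sub_right (hx y) _

theorem greedy_gap_le (hf : Submodular f) (hmono : Monotone f) {S : Finset Ω} {x : Ω}
    (hx : ∀ y, f (insert y S) ≤ f (insert x S)) {W : Finset Ω} {k : ℕ} (hW : #W ≤ k) :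
    f W - f (insert x S) ≤ (1 - 1 / k) * (f W - f S) := by
  have hgain : 0 ≤ f (insert x S) - f S := sub_nonneg.2 (hmono (subset_insert x S))
  have hkW : f W - f S ≤ k * (f (insert x S) - f S) :=
    (hf.sub_le_card_mul_greedy_gain hmono hx W).trans (by gcongr)
  have : (f W - f S) / k ≤ f (insert x S) - f S :=
    div_le_of_le_mul₀ k.cast_nonneg hgain (by linarith)
  linarith [show (1 - 1 / (k : ℝ)) * (f W - f S) = f W - f S - (f W - f S) / k by ring]

end Submodular

theorem greedy_submodular_guarantee_general (Ω : Type*) [DecidableEq Ω]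
    (f : Finset Ω → ℝ)
    (hmono : ∀ X Y : Finset Ω, X ⊆ Y → f X ≤ f Y)
    (hsub : ∀ X Y : Finset Ω, X ⊆ Y → ∀ x ∉ Y,
      f (insert x Y) - f Y ≤ f (insert x X) - f X)
    (h0 : f ∅ = 0) (k : ℕ) (hk : 1 ≤ k)
    (G : ℕ → Finset Ω) (hG0 : G 0 = ∅)
    (hGstep : ∀ j, ∃ x, G (j + 1) = insert x (G j) ∧
      ∀ y, f (insert y (G j)) ≤ f (insert x (G j))) :
    ∀ W : Finset Ω, W.card ≤ k →
      (1 - 1 / Real.exp 1) * f W ≤ (1 - (1 - 1 / (k : ℝ)) ^ k) * f W ∧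
      (1 - (1 - 1 / (k : ℝ)) ^ k) * f W ≤ f (G k) := by
  intro W hW
  have hmono' : Monotone f := fun X Y h => hmono X Y h
  have hk' : (1 : ℝ) ≤ k := by exact_mod_cast hk
  have hfW : 0 ≤ f W := h0 ▸ hmono' (empty_subset W)
  have hgap : ∀ j, f W - f (G (j + 1)) ≤ (1 - 1 / k) * (f W - f (G j)) := fun j => by
    obtain ⟨x, hGx, hx⟩ := hGstep j
    exact hGx ▸ Submodular.greedy_gap_le hsub hmono' hx hW
  have hgeom := le_geom (u := fun j => f W - f (G j))
    (sub_nonneg.2 (div_le_one_of_le₀ hk' (by linarith))) k fun j _ => hgap j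
  simp only [hG0, h0, sub_zero] at hgeom
  have hexp : (1 - 1 / (k : ℝ)) ^ k ≤ 1 / Real.exp 1 := by
    simpa [Real.exp_neg] using Real.one_sub_div_pow_le_exp_neg hk'
  constructor
  · gcongr
  · linarith

/-- The Nemhauser–Wolsey–Fisher greedy guarantee: for a monotone submodular set function
`f` with `f ∅ = 0`, the set `G k` produced by `k` steps of the greedy algorithm satisfies
`f (G k) ≥ (1 - (1 - 1/k)^k) · max_{|W| ≤ k} f W ≥ (1 - 1/e) · max_{|W| ≤ k} f W`. -/
theorem greedy_submodular_guarantee (Ω : Type*) [Fintype Ω] [DecidableEq Ω] [Nonempty Ω]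
    (f : Finset Ω → ℝ)
    (hmono : ∀ X Y : Finset Ω, X ⊆ Y → f X ≤ f Y)
    (hsub : ∀ X Y : Finset Ω, X ⊆ Y → ∀ x ∉ Y,
      f (insert x Y) - f Y ≤ f (insert x X) - f X)
    (h0 : f ∅ = 0) (k : ℕ) (hk : 1 ≤ k)
    (G : ℕ → Finset Ω) (hG0 : G 0 = ∅)
    (hGstep : ∀ j, ∃ x, G (j + 1) = insert x (G j) ∧
      ∀ y, f (insert y (G j)) ≤ f (insert x (G j))) :
    ∀ W : Finset Ω, W.card ≤ k →
      (1 - 1 / Real.exp 1) * f W ≤ (1 - (1 - 1 / (k : ℝ)) ^ k) * f W ∧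
      (1 - (1 - 1 / (k : ℝ)) ^ k) * f W ≤ f (G k) :=
  greedy_submodular_guarantee_general Ω f hmono hsub h0 k hk G hG0 hGstep
end

section
/- In the auction signaling setting with n bidders, M states, prior λ, valuation matrices V^1,…,V^r with probabilities ρ_t, and k signals: define N_ε = { w(Y) : Y a multiset of Θ with |Y| = ⌈2 ln(4nr)/ε²⌉ }, where w(Y) ∈ [n]^r is given by w_t(Y) = argmax_{i∈[n]} (1/|Y|)Σ_{θ∈Y} V^t(i,θ). Then max_{|W|=k, W⊆N_ε} welfare(W) ≥ max_{|W|=k, W⊆[n]^r} welfare(W) − ε, where welfare(W) = Σ_{θ∈Θ} max_{w∈W} Σ_t ρ_t λ(θ) V^t(w(t),θ). -/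
noncomputable section
open Finset

/-- Maximum of `g` over the finite set `W`, with the max over the empty set taken to be 0. -/
def fmax {ι : Type*} (W : Finset ι) (g : ι → ℝ) : ℝ :=
  if h : W.Nonempty then W.sup' h g else 0

/-!
Take a set `W₀` of `k` winner tuples of maximal welfare and let every state `θ` pick its best
tuple in `W₀`; this splits the states into at most `k` cells. For the conditional prior on a
cell `X`, Hoeffding's inequality and a union bound over the `n r` pairs `(t, i)` give a sample of
`⌈2 ln(4nr)/ε²⌉` states whose empirical means are all within `ε/2` of the conditional means.
The empirical winner tuple of that sample is then `ε`-optimal for every `t` in conditional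
expectation, so it loses at most `ε λ(X)` of welfare on `X`. Replacing every tuple of `W₀` by the
empirical winner of its cell loses at most `ε` in total.
-/

open MeasureTheory ProbabilityTheory Real

section Hoeffding

variable {Ω : Type*} [MeasurableSpace Ω] (ν : Measure Ω) [IsProbabilityMeasure ν]

lemma measureReal_sum_sub_integral_ge_le {f : Ω → ℝ} (hf : Measurable f) {a : ℝ}
    (hfa : ∀ ω, f ω ∈ Set.Icc a (a + 1)) (m : ℕ) {δ : ℝ} (hδ : 0 ≤ δ) :
    (Measure.pi fun _ : Fin m => ν).real {y | m * δ ≤ ∑ j, f (y j) - m * ∫ ω, f ω ∂ν}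
      ≤ exp (-2 * m * δ ^ 2) := by
  have hsubG : HasSubgaussianMGF (fun ω => f ω - ∫ ω, f ω ∂ν) ((‖a + 1 - a‖₊ / 2) ^ 2) ν :=
    hasSubgaussianMGF_of_mem_Icc hf.aemeasurable (ae_of_all _ hfa)
  have hoeffding := HasSubgaussianMGF.measure_sum_ge_le_of_iIndepFun (s := univ)
    (iIndepFun_pi (μ := fun _ : Fin m => ν) (X := fun _ ω => f ω - ∫ ω, f ω ∂ν)
      fun _ => (hf.sub_const _).aemeasurable)
    (fun j _ => HasSubgaussianMGF.of_map (measurable_pi_apply j).aemeasurable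
      (by rwa [(measurePreserving_eval (fun _ : Fin m => ν) j).map_eq]))
    (ε := m * δ) (by positivity)
  convert hoeffding using 3
  · simp [sum_sub_distrib]
  · simp only [neg_mul, add_sub_cancel_left, nnnorm_one, one_div, inv_pow, sum_const, card_univ,
      Fintype.card_fin, nsmul_eq_mul, NNReal.coe_mul, NNReal.coe_natCast, NNReal.coe_inv,
      NNReal.coe_pow, NNReal.coe_ofNat]
    rcases eq_or_ne m 0 with rfl | hm
    · simp
    · field_simp

lemma measureReal_abs_sum_sub_integral_ge_le {f : Ω → ℝ} (hf : Measurable f)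
    (hf01 : ∀ ω, f ω ∈ Set.Icc 0 1) (m : ℕ) {δ : ℝ} (hδ : 0 ≤ δ) :
    (Measure.pi fun _ : Fin m => ν).real {y | m * δ ≤ |∑ j, f (y j) - m * ∫ ω, f ω ∂ν|}
      ≤ 2 * exp (-2 * m * δ ^ 2) := by
  have hneg : ∀ ω, -f ω ∈ Set.Icc (-1) (-1 + 1) := fun ω => by
    simp only [Set.mem_Icc] at hf01 ⊢
    constructor <;> linarith [hf01 ω]
  calc _ ≤ (Measure.pi fun _ : Fin m => ν).real
        ({y | m * δ ≤ ∑ j, f (y j) - m * ∫ ω, f ω ∂ν} ∪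
          {y | m * δ ≤ ∑ j, -f (y j) - m * ∫ ω, -f ω ∂ν}) := by
        refine measureReal_mono fun y hy => ?_
        simp only [Set.mem_ofPred_eq, Set.mem_union, sum_neg_distrib, integral_neg] at hy ⊢
        rcases le_abs'.mp hy with h | h <;> [right; left] <;> linarith
    _ ≤ _ := measureReal_union_le _ _
    _ ≤ _ := by
        have hupper := measureReal_sum_sub_integral_ge_le ν hf (a := 0) (by simpa using hf01) m hδ
        have hlower := measureReal_sum_sub_integral_ge_le ν (f := fun ω => -f ω) hf.neg hneg m hδ
        linarith

lemma exists_forall_abs_sum_sub_integral_lt {ι : Type*} [Fintype ι] {f : ι → Ω → ℝ}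
    (hf : ∀ a, Measurable (f a)) (hf01 : ∀ a ω, f a ω ∈ Set.Icc 0 1) {m : ℕ} {δ : ℝ}
    (hδ : 0 ≤ δ) (hm : 2 * Fintype.card ι * exp (-2 * m * δ ^ 2) < 1) :
    ∃ y : Fin m → Ω, ∀ a, |∑ j, f a (y j) - m * ∫ ω, f a ω ∂ν| < m * δ := by
  by_contra! hbad
  set μ := Measure.pi fun _ : Fin m => ν
  have hcover : Set.univ ⊆ ⋃ a, {y : Fin m → Ω | m * δ ≤ |∑ j, f a (y j) - m * ∫ ω, f a ω ∂ν|} :=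
    fun y _ => by simpa using hbad y
  have : (1 : ℝ) ≤ Fintype.card ι * (2 * exp (-2 * m * δ ^ 2)) :=
    calc (1 : ℝ) = μ.real Set.univ := probReal_univ.symm
      _ ≤ ∑ a, μ.real {y | m * δ ≤ |∑ j, f a (y j) - m * ∫ ω, f a ω ∂ν|} :=
        (measureReal_mono hcover).trans (measureReal_iUnion_fintype_le _)
      _ ≤ ∑ _a : ι, 2 * exp (-2 * m * δ ^ 2) :=
        sum_le_sum fun a _ => measureReal_abs_sum_sub_integral_ge_le ν (hf a) (hf01 a) m hδ
      _ = _ := by simp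
  linarith

end Hoeffding

lemma two_mul_exp_neg_ceil_lt_one {N : ℝ} (hN : 0 ≤ N) {ε : ℝ} (hε : 0 < ε) :
    2 * N * exp (-(⌈2 * log (4 * N) / ε ^ 2⌉₊ * ε ^ 2) / 2) < 1 := by
  rcases hN.eq_or_lt with rfl | hN
  · simp
  have hlog : log (4 * N) ≤ ⌈2 * log (4 * N) / ε ^ 2⌉₊ * ε ^ 2 / 2 := by
    have := Nat.le_ceil (2 * log (4 * N) / ε ^ 2)
    rw [div_le_iff₀ (by positivity)] at this
    linarith
  calc 2 * N * exp (-(⌈2 * log (4 * N) / ε ^ 2⌉₊ * ε ^ 2) / 2)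
      ≤ 2 * N * exp (-log (4 * N)) := by gcongr; linarith
    _ = 1 / 2 := by rw [exp_neg, exp_log (by positivity)]; field_simp; ring
    _ < 1 := by norm_num

lemma integral_finsetSum_smul_dirac {Θ : Type*} [MeasurableSpace Θ] [MeasurableSingletonClass Θ]
    (X : Finset Θ) {q : Θ → ℝ} (hq : ∀ θ, 0 ≤ q θ) (f : Θ → ℝ) :
    ∫ θ, f θ ∂(∑ θ ∈ X, (q θ).toNNReal • Measure.dirac θ) = ∑ θ ∈ X, q θ * f θ := by
  rw [integral_finsetSum_measure fun θ _ => (integrable_dirac (by simp)).smul_measure_nnreal]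
  simp [integral_smul_nnreal_measure, NNReal.smul_def, hq]

lemma measureReal_univ_finsetSum_smul_dirac {Θ : Type*} [MeasurableSpace Θ]
    [MeasurableSingletonClass Θ] (X : Finset Θ) {q : Θ → ℝ} (hq : ∀ θ, 0 ≤ q θ) :
    (∑ θ ∈ X, (q θ).toNNReal • Measure.dirac θ).real Set.univ = ∑ θ ∈ X, q θ := by
  simpa using integral_finsetSum_smul_dirac X hq 1

def IsEmpiricalWinner {τ ι Θ : Type*} {m : ℕ} (V : τ → ι → Θ → ℝ) (y : Fin m → Θ) (w : τ → ι) :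
    Prop :=
  ∀ (t : τ) (i : ι), (∑ j, V t i (y j)) ≤ ∑ j, V t (w t) (y j)

lemma exists_isEmpiricalWinner {τ ι Θ : Type*} [Finite ι] [Nonempty ι] {m : ℕ}
    (V : τ → ι → Θ → ℝ) (y : Fin m → Θ) : ∃ w, IsEmpiricalWinner V y w := by
  choose w hw using fun t => Finite.exists_max fun i => ∑ j, V t i (y j)
  exact ⟨w, fun t i => hw t i⟩

section EmpiricalWinner

variable {Θ τ ι : Type*} [MeasurableSpace Θ] [Fintype τ] [Fintype ι] [Nonempty ι]
  {V : τ → ι → Θ → ℝ} {m : ℕ} {ε : ℝ}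

lemma exists_isEmpiricalWinner_integral_le_add (hVm : ∀ t i, Measurable (V t i))
    (hV : ∀ t i θ, V t i θ ∈ Set.Icc 0 1) (hε : 0 ≤ ε)
    (hm : 2 * (Fintype.card τ * Fintype.card ι) * exp (-(m * ε ^ 2) / 2) < 1)
    (ν : Measure Θ) [IsProbabilityMeasure ν] :
    ∃ (y : Fin m → Θ) (w : τ → ι), IsEmpiricalWinner V y w ∧
      ∀ t i, ∫ θ, V t i θ ∂ν ≤ ∫ θ, V t (w t) θ ∂ν + ε := by
  obtain ⟨y, hy⟩ := exists_forall_abs_sum_sub_integral_lt ν (f := fun p : τ × ι => V p.1 p.2)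
    (fun p => hVm p.1 p.2) (fun p => hV p.1 p.2) (δ := ε / 2) (by positivity)
    (by convert hm using 3 <;> simp; ring)
  obtain ⟨w, hw⟩ := exists_isEmpiricalWinner V y
  refine ⟨y, w, hw, fun t i => ?_⟩
  have hi := abs_lt.mp (hy (t, i))
  have hwt := abs_lt.mp (hy (t, w t))
  have : (m : ℝ) * (∫ θ, V t i θ ∂ν - ∫ θ, V t (w t) θ ∂ν - ε) < 0 := by
    linarith [hw t i]
  linarith [neg_of_mul_neg_right this m.cast_nonneg]

lemma exists_isEmpiricalWinner_integral_le_add_mul [Nonempty Θ]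
    (hVm : ∀ t i, Measurable (V t i)) (hV : ∀ t i θ, V t i θ ∈ Set.Icc 0 1) (hε : 0 ≤ ε)
    (hm : 2 * (Fintype.card τ * Fintype.card ι) * exp (-(m * ε ^ 2) / 2) < 1)
    (ν : Measure Θ) [IsFiniteMeasure ν] :
    ∃ (y : Fin m → Θ) (w : τ → ι), IsEmpiricalWinner V y w ∧
      ∀ t i, ∫ θ, V t i θ ∂ν ≤ ∫ θ, V t (w t) θ ∂ν + ε * ν.real Set.univ := by
  rcases eq_zero_or_neZero ν with rfl | hν
  · obtain ⟨y, w, hw, -⟩ := exists_isEmpiricalWinner_integral_le_add hVm hV hε hm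
      (Measure.dirac (Classical.arbitrary Θ))
    exact ⟨y, w, hw, fun t i => by simp⟩
  obtain ⟨y, w, hw, hle⟩ := exists_isEmpiricalWinner_integral_le_add hVm hV hε hm
    ((ν Set.univ)⁻¹ • ν)
  refine ⟨y, w, hw, fun t i => ?_⟩
  have hpos : 0 < ν.real Set.univ := measureReal_univ_pos
  have := hle t i
  simp only [integral_smul_measure, ENNReal.toReal_inv, smul_eq_mul, ← measureReal_def] at this
  have := mul_le_mul_of_nonneg_left this hpos.le
  rwa [mul_add, ← mul_assoc, ← mul_assoc, mul_inv_cancel₀ hpos.ne', one_mul, one_mul,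
    mul_comm] at this

lemma exists_isEmpiricalWinner_sum_le_add [MeasurableSingletonClass Θ] [Nonempty Θ]
    (hVm : ∀ t i, Measurable (V t i)) (hV : ∀ t i θ, V t i θ ∈ Set.Icc 0 1) (hε : 0 ≤ ε)
    (hm : 2 * (Fintype.card τ * Fintype.card ι) * exp (-(m * ε ^ 2) / 2) < 1)
    {lam : Θ → ℝ} (hlam : ∀ θ, 0 ≤ lam θ) {ρ : τ → ℝ} (hρ : ρ ∈ stdSimplex ℝ τ)
    (X : Finset Θ) (w : τ → ι) :
    ∃ w', (∃ y : Fin m → Θ, IsEmpiricalWinner V y w') ∧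
      ∑ θ ∈ X, ∑ t, ρ t * lam θ * V t (w t) θ ≤
        ∑ θ ∈ X, ∑ t, ρ t * lam θ * V t (w' t) θ + ε * ∑ θ ∈ X, lam θ := by
  obtain ⟨y, w', hw', hle⟩ := exists_isEmpiricalWinner_integral_le_add_mul hVm hV hε hm
    (∑ θ ∈ X, (lam θ).toNNReal • Measure.dirac θ)
  simp only [integral_finsetSum_smul_dirac X hlam, measureReal_univ_finsetSum_smul_dirac X hlam]
    at hle
  refine ⟨w', ⟨y, hw'⟩, ?_⟩
  have hswap (v : τ → ι) : ∑ θ ∈ X, ∑ t, ρ t * lam θ * V t (v t) θ =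
      ∑ t, ρ t * ∑ θ ∈ X, lam θ * V t (v t) θ := by
    rw [sum_comm]
    simp only [mul_sum, mul_assoc]
  calc _ = ∑ t, ρ t * ∑ θ ∈ X, lam θ * V t (w t) θ := hswap w
    _ ≤ ∑ t, ρ t * (∑ θ ∈ X, lam θ * V t (w' t) θ + ε * ∑ θ ∈ X, lam θ) := by
      gcongr with t
      · exact hρ.1 t
      · exact hle t (w t)
    _ = _ := by simp only [mul_add, sum_add_distrib, ← sum_mul, hρ.2, one_mul, hswap]

end EmpiricalWinner

lemma le_fmax {ι : Type*} {W : Finset ι} (g : ι → ℝ) {a : ι} (ha : a ∈ W) : g a ≤ fmax W g := by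
  rw [fmax, dif_pos ⟨a, ha⟩]
  exact le_sup' g ha

lemma exists_mem_fmax_eq {ι : Type*} {W : Finset ι} (hW : W.Nonempty) (g : ι → ℝ) :
    ∃ a ∈ W, fmax W g = g a := by
  rw [fmax, dif_pos hW]
  exact exists_mem_eq_sup' hW g

lemma exists_card_le_forall_card_eq_le {α : Type*} [Fintype α] (k : ℕ) (F : Finset α → ℝ) :
    ∃ W₀ : Finset α, W₀.card ≤ k ∧ ∀ W : Finset α, W.card = k → F W ≤ F W₀ := by
  by_cases h : ((univ : Finset α).powersetCard k).Nonempty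
  · obtain ⟨W₀, hW₀, hmax⟩ := exists_max_image _ F h
    exact ⟨W₀, (mem_powersetCard.mp hW₀).2.le, fun W hW =>
      hmax W (mem_powersetCard.mpr ⟨subset_univ W, hW⟩)⟩
  · exact ⟨∅, by simp, fun W hW => absurd ⟨W, mem_powersetCard.mpr ⟨subset_univ W, hW⟩⟩ h⟩

lemma exists_card_le_sum_fmax_le_add {Θ κ : Type*} [Fintype Θ] [DecidableEq κ]
    {g : Θ → κ → ℝ} {lam : Θ → ℝ} (hlam : ∑ θ, lam θ = 1) {P : κ → Prop} {ε : ℝ} (hε : 0 ≤ ε)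
    (hcell : ∀ (X : Finset Θ) (w : κ), ∃ w', P w' ∧
      ∑ θ ∈ X, g θ w ≤ ∑ θ ∈ X, g θ w' + ε * ∑ θ ∈ X, lam θ)
    (W : Finset κ) :
    ∃ W' : Finset κ, W'.card ≤ W.card ∧ (∀ w ∈ W', P w) ∧
      ∑ θ, fmax W (g θ) ≤ ∑ θ, fmax W' (g θ) + ε := by
  rcases W.eq_empty_or_nonempty with rfl | hW
  · exact ⟨∅, le_rfl, by simp, by simp [fmax, hε]⟩
  choose best hbest_mem hbest using fun θ => exists_mem_fmax_eq hW (g θ)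
  choose Φ hΦP hΦ using fun w => hcell {θ | best θ = w} w
  refine ⟨W.image Φ, card_image_le, by simpa using fun w _ => hΦP w, ?_⟩
  have hfiber (G : Θ → ℝ) : ∑ w ∈ W, ∑ θ with best θ = w, G θ = ∑ θ, G θ :=
    sum_fiberwise_of_maps_to (fun θ _ => hbest_mem θ) G
  have hcells (G : Θ → κ → ℝ) : ∑ w ∈ W, ∑ θ with best θ = w, G θ w = ∑ θ, G θ (best θ) := by
    rw [← hfiber]
    refine sum_congr rfl fun w _ => sum_congr rfl fun θ hθ => ?_
    rw [(mem_filter.mp hθ).2]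
  calc ∑ θ, fmax W (g θ) = ∑ w ∈ W, ∑ θ with best θ = w, g θ w := by
        rw [hcells g]
        exact sum_congr rfl fun θ _ => hbest θ
    _ ≤ ∑ w ∈ W, (∑ θ with best θ = w, g θ (Φ w) + ε * ∑ θ with best θ = w, lam θ) :=
        sum_le_sum fun w _ => hΦ w
    _ = ∑ θ, g θ (Φ (best θ)) + ε := by
        rw [sum_add_distrib, ← mul_sum, hfiber lam, hlam, mul_one, hcells fun θ w => g θ (Φ w)]
    _ ≤ ∑ θ, fmax (W.image Φ) (g θ) + ε := by
        gcongr with θ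
        exact le_fmax _ (mem_image_of_mem Φ (hbest_mem θ))

theorem winner_tuple_net_general (n r M k : ℕ) (hn : 0 < n) (ε : ℝ) (hε : 0 < ε)
    (lam : Fin M → ℝ) (hlam : lam ∈ stdSimplex ℝ (Fin M))
    (V : Fin r → Fin n → Fin M → ℝ) (hV : ∀ t i θ, V t i θ ∈ Set.Icc (0 : ℝ) 1)
    (ρ : Fin r → ℝ) (hρ : ρ ∈ stdSimplex ℝ (Fin r)) :
    ∃ W : Finset (Fin r → Fin n), W.card ≤ k ∧
      (∀ w ∈ W, ∃ y : Fin ⌈2 * Real.log (4 * n * r) / ε ^ 2⌉₊ → Fin M,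
        ∀ (t : Fin r) (i : Fin n), (∑ j, V t i (y j)) ≤ ∑ j, V t (w t) (y j)) ∧
      ∀ W' : Finset (Fin r → Fin n), W'.card = k →
        (∑ θ, fmax W' fun w => ∑ t, ρ t * lam θ * V t (w t) θ) - ε ≤
          ∑ θ, fmax W fun w => ∑ t, ρ t * lam θ * V t (w t) θ := by
  rcases isEmpty_or_nonempty (Fin M) with hM | hM
  · exact ⟨∅, by simp, by simp, fun _ _ => by simp [hε.le]⟩
  have : Nonempty (Fin n) := Fin.pos_iff_nonempty.mp hn
  set g : Fin M → (Fin r → Fin n) → ℝ := fun θ w => ∑ t, ρ t * lam θ * V t (w t) θ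
  obtain ⟨W₀, hW₀k, hW₀opt⟩ := exists_card_le_forall_card_eq_le k fun W => ∑ θ, fmax W (g θ)
  have hm := two_mul_exp_neg_ceil_lt_one (N := r * n) (by positivity) hε
  rw [show (4 : ℝ) * (r * n) = 4 * n * r by ring] at hm
  obtain ⟨W, hWcard, hWnet, hWle⟩ := exists_card_le_sum_fmax_le_add (g := g) hlam.2 hε.le
    (exists_isEmpiricalWinner_sum_le_add (fun _ _ => measurable_of_finite _) hV hε.le
      (by rwa [Fintype.card_fin, Fintype.card_fin]) hlam.1 hρ) W₀
  exact ⟨W, hWcard.trans hW₀k, hWnet, fun W' hW' => by linarith [hW₀opt W' hW']⟩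

/-- There is a set of at most `k` winner tuples, each induced (as empirical argmax) by some
multiset of `⌈2 ln(4nr)/ε²⌉` states, whose welfare is within an additive `ε` of the optimal
welfare over all sets of `k` winner tuples. -/
theorem winner_tuple_net (n r M k : ℕ) (hn : 0 < n) (hr : 0 < r) (ε : ℝ) (hε : 0 < ε)
    (lam : Fin M → ℝ) (hlam : lam ∈ stdSimplex ℝ (Fin M))
    (V : Fin r → Fin n → Fin M → ℝ) (hV : ∀ t i θ, V t i θ ∈ Set.Icc (0 : ℝ) 1)
    (ρ : Fin r → ℝ) (hρ : ρ ∈ stdSimplex ℝ (Fin r)) :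
    ∃ W : Finset (Fin r → Fin n), W.card ≤ k ∧
      (∀ w ∈ W, ∃ y : Fin ⌈2 * Real.log (4 * n * r) / ε ^ 2⌉₊ → Fin M,
        ∀ (t : Fin r) (i : Fin n), (∑ j, V t i (y j)) ≤ ∑ j, V t (w t) (y j)) ∧
      ∀ W' : Finset (Fin r → Fin n), W'.card = k →
        (∑ θ, fmax W' fun w => ∑ t, ρ t * lam θ * V t (w t) θ) - ε ≤
          ∑ θ, fmax W fun w => ∑ t, ρ t * lam θ * V t (w t) θ :=
  winner_tuple_net_general n r M k hn ε hε lam hlam V hV ρ hρ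
end
end
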